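/- Let n ∈ ℕ, t ∈ ℂ, let p be a monic polynomial of degree n over ℂ, and let κ, κ̃ ∈ ℂ, not both zero. Assume the degenerate orthogonality conditions: for every j with 0 ≤ j ≤ n, κ·[I₃ − I₁](x ↦ x^j·p(x)·e^{2θ(x;t)}) + κ̃·[I₃ − I₅](x ↦ x^j·p(x)·e^{2θ(x;t)}) = 0. Then F(x) := p(x)·exp(θ(x;t)) satisfies F''(x) = (x⁴ + t·x² + 2(n+1)·x + Λ)·F(x) for all x ∈ ℂ, where Λ := t²/4 − 2·(coefficient of x^{n−1} in p), equivalently Λ = t²/4 + 2·(sum of the roots of p counted with multiplicity). In particular the quasi-polynomial F solves the quartic anharmonic oscillator boundary problem with J = n + 1. -/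

import Mathlib

/-!
Let `L q = κ·[I₃ − I₁](q e^{2θ}) + κ̃·[I₃ − I₅](q e^{2θ})` on polynomials. Integrating by parts,
`L (q' + (2x² + t) q) = 0` (the boundary values at `0` cancel inside each wedge), so the operator
`A q = q'' + (2x² + t) q'` is symmetric for the pairing `(f, g) ↦ L (f g)`. By symmetry,
`A p − 2n x p` is again orthogonal to the polynomials of degree `≤ n`, and its degree is `≤ n`, so
it is a multiple `c p` of `p` once we know that no nonzero polynomial of degree `< d` is orthogonal
to all polynomials of degree `≤ d`. This is proved by induction on `d`: such an `s` of degree `e`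
satisfies `A s = (2e x + c) s` by the same argument, and symmetry then propagates orthogonality to
every degree, forcing `s = 0` because `L ≠ 0`. That `L ≠ 0` holds as the Wronskian of
`I₃ − I₁` and `I₃ − I₅` on `1, x` does not depend on `t` and is explicitly nonzero at `t = 0`.
The coefficient of `xⁿ` gives `c = −2·(coefficient of xⁿ⁻¹ in p)`, and
`(p e^θ)'' = (A p + (2x + θ'²) p) e^θ` yields the equation.
-/

open Polynomial

noncomputable def rayDir (k : ℕ) : ℂ := Complex.exp ((k : ℂ) * Real.pi * Complex.I / 3)

noncomputable def rayIntegral (k : ℕ) (f : ℂ → ℂ) : ℂ :=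
  rayDir k * ∫ r in Set.Ioi (0 : ℝ), f ((r : ℂ) * rayDir k)

section WeightedDerivative

variable {R : Type*} [CommRing R]

/-- `weightedDeriv t q = e^{-2θ} (q e^{2θ})'`, where `θ' = X² + t/2`. -/
noncomputable def weightedDeriv (t : R) (q : R[X]) : R[X] :=
  derivative q + (2 * X ^ 2 + C t) * q

lemma weightedDeriv_mul (t : R) (f g : R[X]) :
    weightedDeriv t (f * g) = derivative f * g + f * weightedDeriv t g := by
  simp only [weightedDeriv, derivative_mul]
  ring

lemma coeff_X_mul_derivative (q : R[X]) (k : ℕ) :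
    (X * derivative q).coeff k = k * q.coeff k := by
  cases k with
  | zero => simp
  | succ k => rw [coeff_X_mul, coeff_derivative]; push_cast; ring

lemma weightedDeriv_derivative_sub_eq (t k : R) (q : R[X]) :
    weightedDeriv t (derivative q) - C (2 * k) * X * q
      = derivative (derivative q) + C t * derivative q
        + C 2 * (X * (X * derivative q - C k * q)) := by
  simp only [weightedDeriv, map_mul, map_ofNat]
  ring

lemma degree_X_mul_derivative_sub_lt {q : R[X]} {k : ℕ} (hq : q.degree ≤ k) :
    (X * derivative q - C (k : R) * q).degree < (k : WithBot ℕ) := by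
  refine (degree_lt_iff_coeff_zero _ _).2 fun m hm => ?_
  rw [coeff_sub, coeff_X_mul_derivative, coeff_C_mul]
  rcases hm.eq_or_lt with rfl | hlt
  · ring
  · rw [coeff_eq_zero_of_degree_lt (hq.trans_lt (by exact_mod_cast hlt))]
    ring

lemma degree_weightedDeriv_derivative_sub_le (t : R) {q : R[X]} {k : ℕ} (hq : q.degree ≤ k) :
    (weightedDeriv t (derivative q) - C (2 * k : R) * X * q).degree ≤ (k : WithBot ℕ) := by
  have hq' : (derivative q).degree ≤ k := degree_derivative_le.trans hq
  have hX : (X * (X * derivative q - C (k : R) * q)).degree ≤ (k : WithBot ℕ) := by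
    refine (degree_mul_le _ _).trans ?_
    rw [add_comm]
    exact (add_le_add le_rfl degree_X_le).trans
      (Nat.WithBot.add_one_le_of_lt (degree_X_mul_derivative_sub_lt hq))
  rw [weightedDeriv_derivative_sub_eq, C_mul' t, C_mul' 2]
  exact degree_add_le_of_degree_le (degree_add_le_of_degree_le
    (degree_derivative_le.trans hq') ((degree_smul_le _ _).trans hq'))
    ((degree_smul_le _ _).trans hX)

lemma coeff_weightedDeriv_derivative_sub_natDegree (t : R) (p : R[X]) :
    (weightedDeriv t (derivative p) - C (2 * p.natDegree : R) * X * p).coeff p.natDegree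
      = -2 * p.nextCoeff := by
  have hvanish : ∀ m, p.natDegree < m → p.coeff m = 0 := fun m => coeff_eq_zero_of_natDegree_lt
  rw [weightedDeriv_derivative_sub_eq]
  simp only [coeff_add, coeff_C_mul, coeff_derivative, hvanish _ (Nat.lt_add_one _),
    hvanish _ (by omega : p.natDegree < p.natDegree + 1 + 1), zero_mul, mul_zero, zero_add]
  rcases h : p.natDegree with _ | m
  · simp [nextCoeff, h]
  · rw [coeff_X_mul, coeff_sub, coeff_X_mul_derivative, coeff_C_mul,
      nextCoeff_of_natDegree_pos (by omega), h]
    push_cast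
    ring

end WeightedDerivative

section Orthogonality

variable {K : Type*} [Field K] {t : K} {L : K[X] →ₗ[K] K}

lemma map_C_mul (L : K[X] →ₗ[K] K) (a : K) (f : K[X]) : L (C a * f) = a * L f := by
  rw [C_mul', map_smul, smul_eq_mul]

lemma map_mul_weightedDeriv (hL : ∀ q, L (weightedDeriv t q) = 0) (f g : K[X]) :
    L (f * weightedDeriv t g) = -L (derivative f * g) := by
  have h := hL (f * g)
  rw [weightedDeriv_mul, map_add] at h
  linear_combination h

-- The symmetry of the operator `A q = q'' + (2X² + t) q'`.
lemma map_mul_weightedDeriv_derivative_comm (hL : ∀ q, L (weightedDeriv t q) = 0)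
    (f g : K[X]) :
    L (f * weightedDeriv t (derivative g)) = L (weightedDeriv t (derivative f) * g) := by
  rw [map_mul_weightedDeriv hL, mul_comm _ g, map_mul_weightedDeriv hL, mul_comm]

lemma eq_zero_of_forall_map_mul_eq_zero [CharZero K] (hL : ∀ q, L (weightedDeriv t q) = 0)
    (hL0 : L ≠ 0) {s : K[X]} (hs : ∀ q, L (q * s) = 0) : s = 0 := by
  induction h : s.natDegree using Nat.strong_induction_on generalizing s with | _ d ih =>
  have hs' : derivative s = 0 := by
    rcases eq_or_ne d 0 with rfl | hd
    · exact derivative_of_natDegree_zero h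
    · refine ih _ (h ▸ natDegree_derivative_lt (h ▸ hd)) (fun q => ?_) rfl
      have h1 := map_mul_weightedDeriv hL q s
      rw [weightedDeriv, mul_add, map_add, hs, ← mul_assoc, hs] at h1
      linear_combination h1
  rw [eq_C_of_derivative_eq_zero hs'] at hs ⊢
  refine C_eq_zero.2 (by_contra fun hc => hL0 (LinearMap.ext fun q => ?_))
  rw [LinearMap.zero_apply, ← hs (C (s.coeff 0)⁻¹ * q), mul_right_comm, ← C_mul,
    inv_mul_cancel₀ hc, C_1, one_mul]

def OrthogonalUpTo (L : K[X] →ₗ[K] K) (k : ℕ) (s : K[X]) : Prop :=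
  ∀ q : K[X], q.degree ≤ k → L (q * s) = 0

lemma OrthogonalUpTo.mono {k j : ℕ} {s : K[X]} (h : OrthogonalUpTo L k s) (hjk : j ≤ k) :
    OrthogonalUpTo L j s :=
  fun q hq => h q (hq.trans (by exact_mod_cast hjk))

lemma orthogonalUpTo_of_forall_X_pow {k : ℕ} {s : K[X]} (h : ∀ j ≤ k, L (X ^ j * s) = 0) :
    OrthogonalUpTo L k s := by
  intro q hq
  rw [as_sum_range' q (k + 1) (Nat.lt_succ_of_le (natDegree_le_of_degree_le hq)), Finset.sum_mul,
    map_sum]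
  refine Finset.sum_eq_zero fun j hj => ?_
  rw [← C_mul_X_pow_eq_monomial, mul_assoc, map_C_mul, h j (Finset.mem_range_succ_iff.1 hj),
    mul_zero]

lemma OrthogonalUpTo.succ [CharZero K] (hL : ∀ q, L (weightedDeriv t q) = 0) {s : K[X]}
    {e k : ℕ} {c : K} (hs : weightedDeriv t (derivative s) = (C (2 * e : K) * X + C c) * s)
    (hke : k ≠ e) (h : OrthogonalUpTo L k s) : OrthogonalUpTo L (k + 1) s := by
  have hX : ∀ q : K[X], q.degree ≤ k → L (X * q * s) = 0 := by
    intro q hq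
    have h1 : L (q * weightedDeriv t (derivative s)) = 2 * e * L (X * q * s) := by
      rw [hs, show q * ((C (2 * e : K) * X + C c) * s)
          = C (2 * e : K) * (X * q * s) + C c * (q * s) by ring,
        map_add, map_C_mul, map_C_mul, h q hq, mul_zero, add_zero]
    have h2 : L (weightedDeriv t (derivative q) * s) = 2 * k * L (X * q * s) := by
      rw [show weightedDeriv t (derivative q) * s
          = (weightedDeriv t (derivative q) - C (2 * k : K) * X * q) * s
            + C (2 * k : K) * (X * q * s) by ring,
        map_add, h _ (degree_weightedDeriv_derivative_sub_le t hq), map_C_mul, zero_add]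
    have hne : (2 * e - 2 * k : K) ≠ 0 := by
      rw [sub_ne_zero]; exact_mod_cast (by omega : 2 * e ≠ 2 * k)
    have hsym := map_mul_weightedDeriv_derivative_comm hL q s
    exact (mul_eq_zero.1 (by linear_combination hsym - h1 + h2 :
      (2 * e - 2 * k : K) * L (X * q * s) = 0)).resolve_left hne
  intro q hq
  have hdivX : q.divX.degree ≤ k := (degree_le_iff_coeff_zero _ _).2 fun m hm => by
    have hkm : k < m := by exact_mod_cast hm
    rw [coeff_divX]
    exact coeff_eq_zero_of_degree_lt (hq.trans_lt (by exact_mod_cast (by omega : k + 1 < m + 1)))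
  rw [← divX_mul_X_add q, add_mul, map_add, mul_comm q.divX, hX _ hdivX,
    h _ (degree_C_le.trans (by exact_mod_cast Nat.zero_le k)), add_zero]

lemma OrthogonalUpTo.forall_map_mul_eq_zero [CharZero K] (hL : ∀ q, L (weightedDeriv t q) = 0)
    {s : K[X]} {e : ℕ} {c : K}
    (hs : weightedDeriv t (derivative s) = (C (2 * e : K) * X + C c) * s)
    (h : OrthogonalUpTo L (e + 1) s) (q : K[X]) : L (q * s) = 0 := by
  have hall : ∀ k, OrthogonalUpTo L (e + 1 + k) s := fun k => by
    induction k with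
    | zero => exact h
    | succ k ih => exact ih.succ hL hs (by show e + 1 + k ≠ e; omega)
  exact hall q.natDegree q (degree_le_natDegree.trans (by exact_mod_cast Nat.le_add_left _ _))

lemma exists_weightedDeriv_derivative_eq_of_orthogonalUpTo
    (hL : ∀ q, L (weightedDeriv t q) = 0) {s : K[X]} {d : ℕ}
    (hU : ∀ r : K[X], r.degree < d → OrthogonalUpTo L d r → r = 0) (hs : s.degree = d)
    (h : OrthogonalUpTo L d s) :
    ∃ c, weightedDeriv t (derivative s) = (C (2 * d : K) * X + C c) * s := by
  set u := weightedDeriv t (derivative s) - C (2 * d : K) * X * s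
  have hu : u.degree ≤ d := degree_weightedDeriv_derivative_sub_le t hs.le
  have hu_orth : OrthogonalUpTo L d u := fun q hq => by
    rw [← h _ (degree_weightedDeriv_derivative_sub_le t hq), mul_sub, map_sub,
      map_mul_weightedDeriv_derivative_comm hL, sub_mul, map_sub]
    congr 2
    ring
  set c := u.coeff d / s.coeff d
  have hle : (u - C c * s).degree ≤ d :=
    (degree_sub_le _ _).trans (max_le hu ((C_mul' c s ▸ degree_smul_le _ _).trans hs.le))
  have hdeg : (u - C c * s).degree < d := (degree_lt_iff_coeff_zero _ _).2 fun m hm => by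
    rcases hm.eq_or_lt with rfl | hlt
    · rw [coeff_sub, coeff_C_mul, div_mul_cancel₀ _ (coeff_ne_zero_of_eq_degree hs), sub_self]
    · exact coeff_eq_zero_of_degree_lt (hle.trans_lt (by exact_mod_cast hlt))
  have hzero := hU _ hdeg fun q hq => by rw [mul_sub, map_sub, hu_orth q hq, mul_left_comm,
    map_C_mul, h q hq, mul_zero, sub_zero]
  exact ⟨c, by linear_combination hzero⟩

variable [CharZero K]

lemma eq_zero_of_orthogonalUpTo (hL : ∀ q, L (weightedDeriv t q) = 0) (hL0 : L ≠ 0) {d : ℕ}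
    {s : K[X]} (hs : s.degree < d) (h : OrthogonalUpTo L d s) : s = 0 := by
  induction d using Nat.strong_induction_on generalizing s with | _ d ih =>
  by_contra hs0
  have hed : s.natDegree < d := (natDegree_lt_iff_degree_lt hs0).2 hs
  obtain ⟨c, hc⟩ := exists_weightedDeriv_derivative_eq_of_orthogonalUpTo hL
    (fun r hr hro => ih _ hed hr hro) (degree_eq_natDegree hs0) (h.mono hed.le)
  exact hs0 (eq_zero_of_forall_map_mul_eq_zero hL hL0 ((h.mono hed).forall_map_mul_eq_zero hL hc))

theorem weightedDeriv_derivative_eq_of_orthogonalUpTo (hL : ∀ q, L (weightedDeriv t q) = 0)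
    (hL0 : L ≠ 0) {p : K[X]} (hp : p.Monic) (h : OrthogonalUpTo L p.natDegree p) :
    weightedDeriv t (derivative p) = (C (2 * p.natDegree : K) * X - C (2 * p.nextCoeff)) * p := by
  obtain ⟨c, hc⟩ := exists_weightedDeriv_derivative_eq_of_orthogonalUpTo hL
    (fun r hr hro => eq_zero_of_orthogonalUpTo hL hL0 hr hro) (degree_eq_natDegree hp.ne_zero) h
  have hcoeff := coeff_weightedDeriv_derivative_sub_natDegree t p
  rw [hc, show (C (2 * p.natDegree : K) * X + C c) * p - C (2 * p.natDegree : K) * X * p = C c * p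
    by ring, coeff_C_mul, hp.coeff_natDegree, mul_one] at hcoeff
  rw [hc, hcoeff]
  simp only [map_mul, map_neg, map_ofNat]
  ring

end Orthogonality

open MeasureTheory Filter Topology Set Asymptotics

lemma norm_rayDir (k : ℕ) : ‖rayDir k‖ = 1 := by
  rw [rayDir, show (k : ℂ) * Real.pi * Complex.I / 3 = ((k * Real.pi / 3 : ℝ) : ℂ) * Complex.I by
    push_cast; ring]
  exact Complex.norm_exp_ofReal_mul_I _

lemma rayDir_pow_three {k : ℕ} (hk : Odd k) : rayDir k ^ 3 = -1 := by
  obtain ⟨m, rfl⟩ := hk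
  rw [rayDir, ← Complex.exp_nat_mul,
    show ((3 : ℕ) : ℂ) * (((2 * m + 1 : ℕ) : ℂ) * Real.pi * Complex.I / 3)
      = m * (2 * Real.pi * Complex.I) + Real.pi * Complex.I by push_cast; ring,
    Complex.exp_add, Complex.exp_nat_mul_two_pi_mul_I, Complex.exp_pi_mul_I, one_mul]

lemma rayDir_injOn : InjOn rayDir (Iio 6) := by
  intro k hk k' hk' h
  obtain ⟨n, hn⟩ := Complex.exp_eq_exp_iff_exists_int.1 h
  have hpi : (Real.pi : ℂ) * Complex.I ≠ 0 :=
    mul_ne_zero (by exact_mod_cast Real.pi_ne_zero) Complex.I_ne_zero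
  have hcast : ((k : ℤ) : ℂ) = ((k' + 6 * n : ℤ) : ℂ) := by
    push_cast
    exact mul_right_cancel₀ hpi (by linear_combination 3 * hn)
  have := Int.cast_injective hcast
  simp only [mem_Iio] at hk hk'
  omega

noncomputable def weight (t x : ℂ) : ℂ := Complex.exp (2 * (x ^ 3 / 3 + t * x / 2))

lemma norm_weight_ofReal_mul_rayDir {k : ℕ} (hk : Odd k) (t : ℂ) (r : ℝ) :
    ‖weight t (r * rayDir k)‖ = Real.exp (-(2 * r ^ 3 / 3) + (t * rayDir k).re * r) := by
  rw [weight, Complex.norm_exp, mul_pow, rayDir_pow_three hk,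
    show 2 * ((r : ℂ) ^ 3 * -1 / 3 + t * (r * rayDir k) / 2)
      = ((-(2 * r ^ 3 / 3) : ℝ) : ℂ) + t * rayDir k * r by push_cast; ring]
  simp [-Complex.ofReal_pow]

lemma tendsto_pow_mul_exp_neg_cube (i : ℕ) (c : ℝ) :
    Tendsto (fun r : ℝ => r ^ i * Real.exp (-(2 * r ^ 3 / 3) + c * r)) atTop (𝓝 0) := by
  refine squeeze_zero' ?_ ?_ (Real.tendsto_pow_mul_exp_neg_atTop_nhds_zero i)
  · filter_upwards [eventually_ge_atTop 0] with r hr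
    positivity
  · filter_upwards [eventually_ge_atTop (max 1 (2 * (|c| + 1)))] with r hr
    have h1 : 1 ≤ r := le_of_max_le_left hr
    have h2 : 2 * (|c| + 1) ≤ r := le_of_max_le_right hr
    refine mul_le_mul_of_nonneg_left (Real.exp_le_exp.2 ?_) (by positivity)
    nlinarith [le_abs_self c, mul_le_mul h2 h1 (by norm_num) (by linarith)]

lemma isBigO_pow_mul_exp_neg_cube (i : ℕ) (c : ℝ) :
    (fun r : ℝ => r ^ i * Real.exp (-(2 * r ^ 3 / 3) + c * r)) =O[atTop] fun r => Real.exp (-r) :=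
  ((tendsto_pow_mul_exp_neg_cube i (c + 1)).isBigO_one ℝ |>.mul (isBigO_refl _ _)).congr
    (fun r => by rw [mul_assoc, ← Real.exp_add]; ring_nf) fun r => one_mul _

lemma integrableOn_pow_mul_exp_neg_cube (i : ℕ) (c : ℝ) :
    IntegrableOn (fun r : ℝ => r ^ i * Real.exp (-(2 * r ^ 3 / 3) + c * r)) (Ioi 0) :=
  integrable_of_isBigO_exp_neg one_pos (by fun_prop : Continuous _).continuousOn
    (by simpa using isBigO_pow_mul_exp_neg_cube i c)

variable {k : ℕ}

lemma isBigO_eval_mul_weight_ray (hk : Odd k) (t : ℂ) (q : ℂ[X]) :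
    (fun r : ℝ => q.eval (r * rayDir k) * weight t (r * rayDir k)) =O[atTop]
      fun r => Real.exp (-r) := by
  induction q using Polynomial.induction_on' with
  | add p q hp hq => simpa only [eval_add, add_mul] using hp.add hq
  | monomial i a =>
    refine isBigO_norm_left.1 <| ((isBigO_pow_mul_exp_neg_cube i (t * rayDir k).re).const_mul_left
      ‖a‖).congr' ?_ EventuallyEq.rfl
    filter_upwards [eventually_ge_atTop 0] with r hr
    rw [eval_monomial, norm_mul, norm_mul, norm_pow, norm_mul, norm_weight_ofReal_mul_rayDir hk,
      norm_rayDir, Complex.norm_real, Real.norm_of_nonneg hr, mul_one, mul_assoc]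

lemma continuous_eval_mul_weight_ray (t : ℂ) (q : ℂ[X]) :
    Continuous fun r : ℝ => q.eval (r * rayDir k) * weight t (r * rayDir k) := by
  unfold weight
  fun_prop

lemma integrableOn_eval_mul_weight_ray (hk : Odd k) (t : ℂ) (q : ℂ[X]) :
    IntegrableOn (fun r : ℝ => q.eval (r * rayDir k) * weight t (r * rayDir k)) (Ioi 0) :=
  (integrable_norm_iff (continuous_eval_mul_weight_ray t q).aestronglyMeasurable).1 <|
    integrable_of_isBigO_exp_neg one_pos (continuous_eval_mul_weight_ray t q).norm.continuousOn
      (by simpa using (isBigO_eval_mul_weight_ray hk t q).norm_left)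

noncomputable def rayMoment (k : ℕ) (t : ℂ) (q : ℂ[X]) : ℂ :=
  rayIntegral k fun x => q.eval x * weight t x

lemma rayMoment_add (hk : Odd k) (t : ℂ) (p q : ℂ[X]) :
    rayMoment k t (p + q) = rayMoment k t p + rayMoment k t q := by
  simp only [rayMoment, rayIntegral, eval_add, add_mul]
  rw [integral_add (integrableOn_eval_mul_weight_ray hk t p)
    (integrableOn_eval_mul_weight_ray hk t q), mul_add]

lemma rayMoment_C_mul (t a : ℂ) (q : ℂ[X]) : rayMoment k t (C a * q) = a * rayMoment k t q := by
  simp only [rayMoment, rayIntegral, eval_mul, eval_C, mul_assoc, integral_const_mul]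
  ring

lemma hasDerivAt_eval_mul_exp_eval (q P : ℂ[X]) (z : ℂ) :
    HasDerivAt (fun z => q.eval z * Complex.exp (P.eval z))
      ((derivative q + derivative P * q).eval z * Complex.exp (P.eval z)) z := by
  refine ((q.hasDerivAt z).mul (P.hasDerivAt z).cexp).congr_deriv ?_
  simp only [eval_add, eval_mul]
  ring

lemma hasDerivAt_eval_mul_weight (t : ℂ) (q : ℂ[X]) (z : ℂ) :
    HasDerivAt (fun z => q.eval z * weight t z) ((weightedDeriv t q).eval z * weight t z) z := by
  have hP : ∀ z, 2 * (z ^ 3 / 3 + t * z / 2) = (C (2 / 3) * X ^ 3 + C t * X).eval z := fun z => by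
    simp only [eval_add, eval_mul, eval_C, eval_pow, eval_X]
    ring
  have hP' : derivative (C (2 / 3) * X ^ 3 + C t * X) = 2 * X ^ 2 + C t := by
    simp only [derivative_add, derivative_C_mul_X_pow, derivative_C_mul_X]
    norm_num [map_ofNat C 2]
  have h := hasDerivAt_eval_mul_exp_eval q (C (2 / 3) * X ^ 3 + C t * X) z
  simp only [← hP, hP'] at h
  exact h

lemma hasDerivAt_weight_left (z t : ℂ) : HasDerivAt (weight · z) (z * weight t z) t := by
  refine (((((hasDerivAt_id' t).mul_const z).div_const 2).const_add (z ^ 3 / 3)).const_mul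
    2).cexp.congr_deriv ?_
  rw [weight]
  ring

lemma rayMoment_weightedDeriv (hk : Odd k) (t : ℂ) (q : ℂ[X]) :
    rayMoment k t (weightedDeriv t q) = -q.eval 0 := by
  set ω := rayDir k
  have hderiv : ∀ r : ℝ, HasDerivAt (fun r : ℝ => q.eval (r * ω) * weight t (r * ω))
      (ω * ((weightedDeriv t q).eval (r * ω) * weight t (r * ω))) r := fun r => by
    simpa [mul_comm] using ((hasDerivAt_eval_mul_weight t q (r * ω)).comp (r : ℂ)
      ((hasDerivAt_id (r : ℂ)).mul_const ω)).comp_ofReal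
  have hFTC := integral_Ioi_of_hasDerivAt_of_tendsto (hderiv 0).continuousAt.continuousWithinAt
    (fun r _ => hderiv r) ((integrableOn_eval_mul_weight_ray hk t _).const_mul ω)
    ((isBigO_eval_mul_weight_ray hk t q).trans_tendsto Real.tendsto_exp_neg_atTop_nhds_zero)
  rw [rayMoment, rayIntegral, ← integral_const_mul, hFTC]
  simp [weight]

lemma hasDerivAt_rayMoment_X_pow (hk : Odd k) (j : ℕ) (τ₀ : ℂ) :
    HasDerivAt (fun τ => rayMoment k τ (X ^ j)) (rayMoment k τ₀ (X ^ (j + 1))) τ₀ := by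
  set ω := rayDir k
  have hF : ∀ (τ : ℂ) (i : ℕ),
      rayMoment k τ (X ^ i) = ω * ∫ r in Ioi (0 : ℝ), (r * ω) ^ i * weight τ (r * ω) := by
    simp [rayMoment, rayIntegral, ω]
  have hint : ∀ (τ : ℂ) (i : ℕ),
      IntegrableOn (fun r : ℝ => (r * ω) ^ i * weight τ (r * ω)) (Ioi 0) :=
    fun τ i => by simpa using integrableOn_eval_mul_weight_ray hk τ (X ^ i)
  have key := hasDerivAt_integral_of_dominated_loc_of_deriv_le
    (F := fun τ (r : ℝ) => (r * ω) ^ j * weight τ (r * ω))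
    (F' := fun τ (r : ℝ) => (r * ω) ^ (j + 1) * weight τ (r * ω))
    (bound := fun r : ℝ => r ^ (j + 1) * Real.exp (-(2 * r ^ 3 / 3) + (‖τ₀‖ + 1) * r))
    (Metric.ball_mem_nhds τ₀ one_pos)
    (Eventually.of_forall fun τ => (hint τ j).aestronglyMeasurable)
    (hint τ₀ j) (hint τ₀ (j + 1)).aestronglyMeasurable ?_
    (integrableOn_pow_mul_exp_neg_cube (j + 1) (‖τ₀‖ + 1)) ?_
  · simpa only [hF] using key.2.const_mul ω
  · filter_upwards [ae_restrict_mem measurableSet_Ioi] with r (hr : 0 < r) τ hτ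
    rw [norm_mul, norm_pow, norm_mul, Complex.norm_real, Real.norm_of_nonneg hr.le, norm_rayDir,
      mul_one, norm_weight_ofReal_mul_rayDir hk]
    refine mul_le_mul_of_nonneg_left (Real.exp_le_exp.2 ?_) (by positivity)
    have : (τ * ω).re ≤ ‖τ₀‖ + 1 := calc
      (τ * ω).re ≤ ‖τ * ω‖ := Complex.re_le_norm _
      _ = ‖τ‖ := by rw [norm_mul, norm_rayDir, mul_one]
      _ ≤ ‖τ₀‖ + 1 := by linarith [norm_le_norm_add_norm_sub' τ τ₀, mem_ball_iff_norm.1 hτ]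
    nlinarith
  · refine ae_of_all _ fun r τ _ => ?_
    simpa [pow_succ, mul_assoc, mul_comm, mul_left_comm] using
      (hasDerivAt_weight_left (r * ω) τ).const_mul ((r * ω) ^ j)

lemma integral_pow_mul_exp_neg_cube_pos (j : ℕ) :
    0 < ∫ r in Ioi (0 : ℝ), r ^ j * Real.exp (-(2 * r ^ 3 / 3)) := by
  have hint : IntegrableOn (fun r : ℝ => r ^ j * Real.exp (-(2 * r ^ 3 / 3))) (Ioi 0) := by
    simpa using integrableOn_pow_mul_exp_neg_cube j 0
  refine (setIntegral_pos_iff_support_of_nonneg_ae ?_ hint).2 ?_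
  · filter_upwards [ae_restrict_mem measurableSet_Ioi] with r (hr : 0 < r)
    positivity
  · refine lt_of_lt_of_le (by simp) (measure_mono (s := Ioi 0) fun r (hr : 0 < r) =>
      ⟨(mul_pos (pow_pos hr j) (Real.exp_pos _)).ne', hr⟩)

lemma rayMoment_zero_X_pow (hk : Odd k) (j : ℕ) :
    rayMoment k 0 (X ^ j)
      = rayDir k ^ (j + 1) * ∫ r in Ioi (0 : ℝ), r ^ j * Real.exp (-(2 * r ^ 3 / 3)) := by
  have h : ∀ r : ℝ, (X ^ j : ℂ[X]).eval (r * rayDir k) * weight 0 (r * rayDir k)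
      = rayDir k ^ j * ((r ^ j * Real.exp (-(2 * r ^ 3 / 3)) : ℝ) : ℂ) := fun r => by
    rw [eval_pow, eval_X, weight, mul_pow, mul_pow, rayDir_pow_three hk]
    push_cast
    ring_nf
  rw [rayMoment, rayIntegral, funext h, integral_const_mul, integral_complex_ofReal]
  ring

/-- The integral of `q e^{2θ}` along the wedge from `∞·ω_c` through `0` to `∞·ω₃`. -/
noncomputable def wedgeMoment {c : ℕ} (hc : Odd c) (t : ℂ) : ℂ[X] →ₗ[ℂ] ℂ where
  toFun q := rayMoment 3 t q - rayMoment c t q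
  map_add' p q := by
    rw [rayMoment_add (by decide : Odd 3), rayMoment_add hc]
    ring
  map_smul' a q := by
    simp only [← C_mul', rayMoment_C_mul, smul_eq_mul, RingHom.id_apply]
    ring

variable {c c' : ℕ}

lemma wedgeMoment_weightedDeriv (hc : Odd c) (t : ℂ) (q : ℂ[X]) :
    wedgeMoment hc t (weightedDeriv t q) = 0 := by
  simp [wedgeMoment, rayMoment_weightedDeriv hc, rayMoment_weightedDeriv (by decide : Odd 3)]

lemma two_mul_wedgeMoment_X_sq (hc : Odd c) (t : ℂ) :
    2 * wedgeMoment hc t (X ^ 2) = -t * wedgeMoment hc t 1 := by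
  have h := wedgeMoment_weightedDeriv hc t 1
  rw [weightedDeriv, derivative_one, zero_add, mul_one, ← map_ofNat C 2, map_add, map_C_mul,
    ← mul_one (C t), map_C_mul] at h
  linear_combination h

lemma hasDerivAt_wedgeMoment_X_pow (hc : Odd c) (j : ℕ) (t : ℂ) :
    HasDerivAt (fun τ => wedgeMoment hc τ (X ^ j)) (wedgeMoment hc t (X ^ (j + 1))) t :=
  (hasDerivAt_rayMoment_X_pow (by decide : Odd 3) j t).sub (hasDerivAt_rayMoment_X_pow hc j t)

noncomputable def wedgeWronskian (hc : Odd c) (hc' : Odd c') (t : ℂ) : ℂ :=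
  wedgeMoment hc t 1 * wedgeMoment hc' t X - wedgeMoment hc t X * wedgeMoment hc' t 1

lemma hasDerivAt_wedgeWronskian (hc : Odd c) (hc' : Odd c') (t : ℂ) :
    HasDerivAt (wedgeWronskian hc hc') 0 t := by
  have hd : ∀ {c} (hc : Odd c),
      HasDerivAt (fun τ => wedgeMoment hc τ 1) (wedgeMoment hc t X) t ∧
      HasDerivAt (fun τ => wedgeMoment hc τ X) (wedgeMoment hc t (X ^ 2)) t := fun hc =>
    ⟨by simpa using hasDerivAt_wedgeMoment_X_pow hc 0 t,
      by simpa using hasDerivAt_wedgeMoment_X_pow hc 1 t⟩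
  refine (((hd hc).1.mul (hd hc').2).sub ((hd hc).2.mul (hd hc').1)).congr_deriv ?_
  linear_combination wedgeMoment hc t 1 / 2 * two_mul_wedgeMoment_X_sq hc' t
    - wedgeMoment hc' t 1 / 2 * two_mul_wedgeMoment_X_sq hc t

lemma wedgeWronskian_zero (hc : Odd c) (hc' : Odd c') :
    wedgeWronskian hc hc' 0
      = (rayDir 3 - rayDir c) * (rayDir 3 - rayDir c') * (rayDir c' - rayDir c)
      * (∫ r in Ioi (0 : ℝ), Real.exp (-(2 * r ^ 3 / 3)))
      * (∫ r in Ioi (0 : ℝ), r * Real.exp (-(2 * r ^ 3 / 3))) := by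
  have h3 : Odd 3 := by decide
  have h1 := fun {k} (hk : Odd k) => by simpa using rayMoment_zero_X_pow hk 0
  have hX := fun {k} (hk : Odd k) => by simpa using rayMoment_zero_X_pow hk 1
  simp only [wedgeWronskian, wedgeMoment, LinearMap.coe_mk, AddHom.coe_mk, h1 hc, h1 hc', h1 h3,
    hX hc, hX hc', hX h3]
  ring

lemma wedgeWronskian_one_five_ne_zero (t : ℂ) :
    wedgeWronskian odd_one (by decide : Odd 5) t ≠ 0 := by
  rw [is_const_of_deriv_eq_zero (fun τ => (hasDerivAt_wedgeWronskian _ _ τ).differentiableAt)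
    (fun τ => (hasDerivAt_wedgeWronskian _ _ τ).deriv) t 0, wedgeWronskian_zero]
  have hne : ∀ {k k'}, k < 6 → k' < 6 → k ≠ k' → rayDir k - rayDir k' ≠ 0 := fun hk hk' h =>
    sub_ne_zero.2 (rayDir_injOn.ne hk hk' h)
  refine mul_ne_zero (mul_ne_zero (mul_ne_zero (mul_ne_zero ?_ ?_) ?_) ?_) ?_
  · exact hne (by norm_num) (by norm_num) (by norm_num)
  · exact hne (by norm_num) (by norm_num) (by norm_num)
  · exact hne (by norm_num) (by norm_num) (by norm_num)
  · exact_mod_cast (by simpa using integral_pow_mul_exp_neg_cube_pos 0 : _ < _).ne'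
  · exact_mod_cast (by simpa using integral_pow_mul_exp_neg_cube_pos 1 : _ < _).ne'

lemma linearIndependent_wedgeMoment (hc : Odd c) (hc' : Odd c') {t : ℂ}
    (hW : wedgeWronskian hc hc' t ≠ 0) :
    LinearIndependent ℂ ![wedgeMoment hc t, wedgeMoment hc' t] := by
  refine LinearIndependent.pair_iff.2 fun a b hab => ?_
  have h1 := LinearMap.congr_fun hab 1
  have hX := LinearMap.congr_fun hab X
  simp only [LinearMap.add_apply, LinearMap.smul_apply, smul_eq_mul, LinearMap.zero_apply] at h1 hX
  rw [wedgeWronskian] at hW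
  refine ⟨(mul_eq_zero.1 ?_).resolve_right hW, (mul_eq_zero.1 ?_).resolve_right hW⟩
  · linear_combination wedgeMoment hc' t X * h1 - wedgeMoment hc' t 1 * hX
  · linear_combination wedgeMoment hc t 1 * hX - wedgeMoment hc t X * h1

lemma deriv_deriv_eval_mul_exp (t : ℂ) (q : ℂ[X]) (x : ℂ) :
    deriv (deriv fun w => q.eval w * Complex.exp (w ^ 3 / 3 + t * w / 2)) x
      = (weightedDeriv t (derivative q) + (2 * X + (X ^ 2 + C (t / 2)) ^ 2) * q).eval x
        * Complex.exp (x ^ 3 / 3 + t * x / 2) := by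
  set θ : ℂ[X] := C (1 / 3) * X ^ 3 + C (t / 2) * X
  have hθ : ∀ w, w ^ 3 / 3 + t * w / 2 = θ.eval w := fun w => by
    simp only [θ, eval_add, eval_mul, eval_C, eval_pow, eval_X]
    ring
  have hθ' : derivative θ = X ^ 2 + C (t / 2) := by
    simp only [θ, derivative_add, derivative_C_mul_X_pow, derivative_C_mul_X]
    norm_num
  simp only [hθ]
  rw [funext fun w => (hasDerivAt_eval_mul_exp_eval q θ w).deriv,
    (hasDerivAt_eval_mul_exp_eval _ θ x).deriv, hθ']
  simp only [weightedDeriv, eval_add, eval_mul, eval_pow, eval_X, eval_C, derivative_add,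
    derivative_mul, derivative_X_pow, derivative_C, eval_ofNat, eval_zero]
  ring

/-- a monic 1-degenerate orthogonal polynomial p of degree n (orthogonal
to x⁰,…,xⁿ with weight e^{2θ(x;t)} on Γ = κ·γ + κ̃·γ̃, κ, κ̃ not both zero) gives a
quasi-polynomial solution F = p·e^θ of the quartic oscillator with J = n+1 and
Λ = t²/4 + 2·(sum of roots of p). -/
theorem degenerate_orthogonal_is_quasipolynomial
    (n : ℕ) (t : ℂ) (p : Polynomial ℂ) (hmonic : p.Monic) (hdeg : p.natDegree = n)
    (κ κ' : ℂ) (hκ : κ ≠ 0 ∨ κ' ≠ 0)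
    (horth : ∀ j ≤ n,
      κ * (rayIntegral 3 (fun x => x ^ j * p.eval x * Complex.exp (2 * (x ^ 3 / 3 + t * x / 2)))
          - rayIntegral 1 (fun x => x ^ j * p.eval x * Complex.exp (2 * (x ^ 3 / 3 + t * x / 2))))
      + κ' * (rayIntegral 3 (fun x => x ^ j * p.eval x * Complex.exp (2 * (x ^ 3 / 3 + t * x / 2)))
          - rayIntegral 5 (fun x => x ^ j * p.eval x * Complex.exp (2 * (x ^ 3 / 3 + t * x / 2))))
      = 0) :
    ∀ x : ℂ,
      deriv (deriv (fun w => p.eval w * Complex.exp (w ^ 3 / 3 + t * w / 2))) x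
        = (x ^ 4 + t * x ^ 2 + 2 * ((n : ℂ) + 1) * x + (t ^ 2 / 4 + 2 * p.roots.sum))
          * (p.eval x * Complex.exp (x ^ 3 / 3 + t * x / 2)) := by
  intro x
  set L := κ • wedgeMoment odd_one t + κ' • wedgeMoment (by decide : Odd 5) t
  have hL : ∀ q, L (weightedDeriv t q) = 0 := fun q => by simp [L, wedgeMoment_weightedDeriv]
  have hL0 : L ≠ 0 := fun h => by
    obtain ⟨h1, h2⟩ := LinearIndependent.pair_iff.1
      (linearIndependent_wedgeMoment _ _ (wedgeWronskian_one_five_ne_zero t)) κ κ' h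
    exact hκ.elim (· h1) (· h2)
  have hp : OrthogonalUpTo L p.natDegree p := orthogonalUpTo_of_forall_X_pow fun j hj => by
    simpa [L, wedgeMoment, rayMoment, weight] using horth j (hdeg ▸ hj)
  have hroots : p.roots.sum = -p.nextCoeff := by
    rw [(IsAlgClosed.splits p).nextCoeff_eq_neg_sum_roots_of_monic hmonic, neg_neg]
  rw [deriv_deriv_eval_mul_exp, weightedDeriv_derivative_eq_of_orthogonalUpTo hL hL0 hmonic hp,
    hdeg, hroots]
  simp only [eval_add, eval_mul, eval_sub, eval_pow, eval_X, eval_C, eval_ofNat]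
  ring
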